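/- Let d ≥ 2 and n ≥ 0 be integers, and let M be the ℤ[S_d]-module given by the direct sum of (n+1) copies of the trivial representation ℤ, one copy of U_d, and (n+1) copies of the standard representation T_d. Then H¹(S_d, M) = 0. -/

import Mathlib

/-!
`M` is the permutation module `ℤ[PicBasis d n]`, and `H¹(G, k[X]) = 0` for every finite group `G`
acting on a set `X` and every torsion-free `k`. Indeed, for a 1-cocycle `f`, the coordinate
`h ↦ (f h) x` is additive on the stabilizer of `x`, hence zero there, as the stabilizer is finite
and `k` is torsion free. So `(f g) x` is the same for all `g` carrying a fixed representative of
the orbit of `x` to `x`, and minus this value, as a function of `x`, is a primitive of `f`.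
-/

open Pointwise

/-- The set of 2-element subsets of `{1, ..., d}`, the basis of `U_d`. -/
abbrev TwoSubsets (d : ℕ) : Type := {s : Finset (Fin d) // s.card = 2}

/-- A basis for the module `ℤ_triv^{n+1} ⊕ U_d ⊕ T_d^{n+1}`: `n+1` fixed points,
the 2-element subsets of `{1,...,d}`, and `n+1` copies of `{1,...,d}`. -/
abbrev PicBasis (d n : ℕ) : Type := Fin (n + 1) ⊕ TwoSubsets d ⊕ (Fin (n + 1) × Fin d)

/-- The `S_d`-action: trivial on the first summand, `τ • {i,j} = {τ i, τ j}` on the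
second, and `τ • (k, i) = (k, τ i)` on the third. -/
instance (d n : ℕ) : MulAction (Equiv.Perm (Fin d)) (PicBasis d n) where
  smul σ x :=
    match x with
    | Sum.inl a => Sum.inl a
    | Sum.inr (Sum.inl s) => Sum.inr (Sum.inl ⟨σ • s.1, by
        rw [Finset.card_smul_finset]; exact s.2⟩)
    | Sum.inr (Sum.inr (k, i)) => Sum.inr (Sum.inr (k, σ i))
  one_smul x := by
    rcases x with a | s | ⟨k, i⟩ <;> simp_all [HSMul.hSMul, SMul.smul, Subtype.ext_iff]
  mul_smul a b x := by
    rcases x with c | s | ⟨k, i⟩ <;>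
      simp_all [HSMul.hSMul, SMul.smul, Subtype.ext_iff, mul_smul, Finset.image_image]
    rfl

universe u

namespace groupCohomology

open MulAction

variable {k G X : Type u} [CommRing k] [Group G] [MulAction G X]

lemma coeff_cocycles₁_mul (f : cocycles₁ (Rep.ofMulAction k G X)) (g h : G) (x : X) :
    (f (g * h)).coeff x = (f h).coeff (g⁻¹ • x) + (f g).coeff x := by
  rw [(mem_cocycles₁_iff f).1 f.2 g h, MonoidAlgebra.coeff_add, Finsupp.add_apply]
  exact congrArg (· + _) (Representation.coeff_ofMulAction g (f h) x)

lemma coeff_cocycles₁_pow_of_mem_stabilizer (f : cocycles₁ (Rep.ofMulAction k G X)) {h : G}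
    {x : X} (hh : h ∈ stabilizer G x) (n : ℕ) :
    (f (h ^ n)).coeff x = n • (f h).coeff x := by
  induction n with
  | zero => simp
  | succ n ih =>
    have hx : (h ^ n)⁻¹ • x = x := mem_stabilizer_iff.1 (inv_mem (pow_mem hh n))
    rw [pow_succ, coeff_cocycles₁_mul, hx, ih, succ_nsmul']

lemma coeff_cocycles₁_eq_zero_of_mem_stabilizer [IsAddTorsionFree k]
    (f : cocycles₁ (Rep.ofMulAction k G X)) {h : G} (hfin : IsOfFinOrder h) {x : X}
    (hh : h ∈ stabilizer G x) : (f h).coeff x = 0 := by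
  obtain ⟨n, hn, hpow⟩ := isOfFinOrder_iff_pow_eq_one.1 hfin
  have := coeff_cocycles₁_pow_of_mem_stabilizer f hh n
  rwa [hpow, cocycles₁_map_one, MonoidAlgebra.coeff_zero, Finsupp.zero_apply, eq_comm,
    nsmul_eq_zero_iff_right hn.ne'] at this

lemma coeff_cocycles₁_eq_of_smul_eq_smul [IsAddTorsionFree k] [Finite G]
    (f : cocycles₁ (Rep.ofMulAction k G X)) {g g' : G} {x y : X} (hg : g • y = x)
    (hg' : g' • y = x) : (f g').coeff x = (f g).coeff x := by
  have hfix : g⁻¹ * g' ∈ stabilizer G y := by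
    rw [mem_stabilizer_iff, mul_smul, hg', ← hg, inv_smul_smul]
  rw [← mul_inv_cancel_left g g', coeff_cocycles₁_mul, ← hg, inv_smul_smul,
    coeff_cocycles₁_eq_zero_of_mem_stabilizer f (isOfFinOrder_of_finite _) hfix, zero_add]

theorem coe_mem_coboundaries₁_ofMulAction [IsAddTorsionFree k] [Finite G]
    (f : cocycles₁ (Rep.ofMulAction k G X)) : ⇑f ∈ coboundaries₁ (Rep.ofMulAction k G X) := by
  let rep (x : X) : X := (⟦x⟧ : orbitRel.Quotient G X).out
  have hrep : ∀ x, ∃ g : G, g • rep x = x := fun x =>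
    mem_orbit_symm.1 (orbitRel_apply.1 (Quotient.mk_out x))
  have hrep_smul : ∀ (g : G) (x : X), rep (g • x) = rep x := fun g x =>
    congrArg Quotient.out (Quotient.sound (mem_orbit x g))
  choose γ hγ using hrep
  let m : X → k := fun x => -(f (γ x)).coeff x
  have hm : (Function.support m).Finite :=
    (Set.finite_iUnion fun g => (f g).coeff.hasFiniteSupport).subset fun x hx =>
      Set.mem_iUnion.2 ⟨γ x, by simpa [m] using hx⟩
  refine ⟨MonoidAlgebra.ofCoeff (Finsupp.ofSupportFinite m hm), funext fun g => ?_⟩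
  refine MonoidAlgebra.coeff_injective (Finsupp.ext fun x => ?_)
  rw [d₀₁_hom_apply]
  have hcomp : (g * γ (g⁻¹ • x)) • rep x = x := by
    rw [mul_smul, ← hrep_smul g⁻¹ x, hγ, smul_inv_smul]
  simp only [MonoidAlgebra.coeff_sub, Finsupp.sub_apply,
    Representation.coeff_ofMulAction, Finsupp.ofSupportFinite_coe, m]
  rw [coeff_cocycles₁_eq_of_smul_eq_smul f hcomp (hγ x), coeff_cocycles₁_mul]
  ring

theorem subsingleton_H1_ofMulAction [IsAddTorsionFree k] [Finite G] :
    Subsingleton (H1 (Rep.ofMulAction k G X)) :=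
  subsingleton_of_forall_eq 0 fun c => H1_induction_on c fun f =>
    (H1π_eq_zero_iff f).2 (coe_mem_coboundaries₁_ofMulAction f)

end groupCohomology

theorem stmt_5_general (d n : ℕ) :
    Subsingleton
      (groupCohomology.H1 (Rep.ofMulAction ℤ (Equiv.Perm (Fin d)) (PicBasis d n))) :=
  groupCohomology.subsingleton_H1_ofMulAction

/-- For `d ≥ 2`, `n ≥ 0`, the module `M = ℤ_triv^{n+1} ⊕ U_d ⊕ T_d^{n+1}`
(the Picard group of `C^d_{g,n}` with its `S_d`-action) has `H¹(S_d, M) = 0`. -/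
theorem stmt_5 (d n : ℕ) (hd : 2 ≤ d) :
    Subsingleton
      (groupCohomology.H1 (Rep.ofMulAction ℤ (Equiv.Perm (Fin d)) (PicBasis d n))) :=
  stmt_5_general d n
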